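/- arXiv:1003.3153 — 9 statements merged into one kernel-verified Lean document; each statement's English description precedes it below -/
import Mathlib

section
/- Peres partial transposition criterion: If ρ is a separable density matrix on ℂ^{d_A} ⊗ ℂ^{d_B}, then both partial transpositions ρ^{T_A} and ρ^{T_B} are positive semidefinite. -/
open scoped BigOperators ComplexOrder

/-- The rank-one matrix `x x*`, with entries `(x x*)_{ij} = x i * conj (x j)`. -/
def vecProjector {d : ℕ} (x : Fin d → ℂ) : Matrix (Fin d) (Fin d) ℂ :=
  fun i j => x i * (starRingEnd ℂ) (x j)

/-- A density matrix on `ℂ^{d_A} ⊗ ℂ^{d_B}` is separable if it is a finite convex combination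
of Kronecker products of rank-one projectors onto unit vectors. -/
def SeparableState {dA dB : ℕ}
    (ρ : Matrix (Fin dA × Fin dB) (Fin dA × Fin dB) ℂ) : Prop :=
  ∃ (K : ℕ) (p : Fin K → ℝ) (x : Fin K → Fin dA → ℂ) (y : Fin K → Fin dB → ℂ),
    (∀ k, 0 ≤ p k) ∧ (∑ k, p k = 1) ∧
    (∀ k, ∑ a, Complex.normSq (x k a) = 1) ∧
    (∀ k, ∑ b, Complex.normSq (y k b) = 1) ∧
    ρ = ∑ k, (p k : ℂ) •
      Matrix.kroneckerMap (· * ·) (vecProjector (x k)) (vecProjector (y k))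

/-- Partial transposition with respect to the first factor:
`(ρ^{T_A})_{(i,μ),(j,ν)} = ρ_{(j,μ),(i,ν)}`. -/
def partialTransposeA {dA dB : ℕ}
    (ρ : Matrix (Fin dA × Fin dB) (Fin dA × Fin dB) ℂ) :
    Matrix (Fin dA × Fin dB) (Fin dA × Fin dB) ℂ :=
  fun p q => ρ (q.1, p.2) (p.1, q.2)

/-- Partial transposition with respect to the second factor:
`(ρ^{T_B})_{(i,μ),(j,ν)} = ρ_{(i,ν),(j,μ)}`. -/
def partialTransposeB {dA dB : ℕ}
    (ρ : Matrix (Fin dA × Fin dB) (Fin dA × Fin dB) ℂ) :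
    Matrix (Fin dA × Fin dB) (Fin dA × Fin dB) ℂ :=
  fun p q => ρ (p.1, q.2) (q.1, p.2)

/-!
Partial transposition sends a product state `(x x*) ⊗ (y y*)` to the product state
`(x̄ x̄*) ⊗ (y y*)` (resp. `(x x*) ⊗ (ȳ ȳ*)`), and it is linear, so it maps separable states to
separable states. A separable state is positive semidefinite, being a nonnegative combination
of Kronecker products of positive semidefinite rank-one matrices.
-/

open Matrix
open scoped Kronecker

lemma vecProjector_eq_vecMulVec {d : ℕ} (x : Fin d → ℂ) :
    vecProjector x = vecMulVec x (star x) :=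
  rfl

lemma posSemidef_vecProjector {d : ℕ} (x : Fin d → ℂ) : (vecProjector x).PosSemidef := by
  rw [vecProjector_eq_vecMulVec]
  exact posSemidef_vecMulVec_self_star x

lemma transpose_vecProjector {d : ℕ} (x : Fin d → ℂ) :
    (vecProjector x)ᵀ = vecProjector (star x) := by
  rw [vecProjector_eq_vecMulVec, vecProjector_eq_vecMulVec, transpose_vecMulVec, star_star]

section PartialTranspose

variable {dA dB : ℕ} {K : ℕ} (p : Fin K → ℂ)
  (A : Fin K → Matrix (Fin dA) (Fin dA) ℂ) (B : Fin K → Matrix (Fin dB) (Fin dB) ℂ)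

lemma partialTransposeA_sum_smul_kronecker :
    partialTransposeA (∑ k, p k • (A k ⊗ₖ B k)) = ∑ k, p k • ((A k)ᵀ ⊗ₖ B k) := by
  ext
  simp [partialTransposeA, Matrix.sum_apply]

lemma partialTransposeB_sum_smul_kronecker :
    partialTransposeB (∑ k, p k • (A k ⊗ₖ B k)) = ∑ k, p k • (A k ⊗ₖ (B k)ᵀ) := by
  ext
  simp [partialTransposeB, Matrix.sum_apply]

end PartialTranspose

namespace SeparableState

variable {dA dB : ℕ} {ρ : Matrix (Fin dA × Fin dB) (Fin dA × Fin dB) ℂ}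

theorem posSemidef (hρ : SeparableState ρ) : ρ.PosSemidef := by
  obtain ⟨K, p, x, y, hp, -, -, -, rfl⟩ := hρ
  refine posSemidef_sum _ fun k _ => PosSemidef.smul ?_ (Complex.zero_le_real.mpr (hp k))
  exact (posSemidef_vecProjector (x k)).kronecker (posSemidef_vecProjector (y k))

theorem partialTransposeA (hρ : SeparableState ρ) : SeparableState (partialTransposeA ρ) := by
  obtain ⟨K, p, x, y, hp, hp1, hx, hy, rfl⟩ := hρ
  refine ⟨K, p, fun k => star (x k), y, hp, hp1, fun k => ?_, hy, ?_⟩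
  · simpa using hx k
  · rw [partialTransposeA_sum_smul_kronecker]
    simp_rw [transpose_vecProjector]

theorem partialTransposeB (hρ : SeparableState ρ) : SeparableState (partialTransposeB ρ) := by
  obtain ⟨K, p, x, y, hp, hp1, hx, hy, rfl⟩ := hρ
  refine ⟨K, p, x, fun k => star (y k), hp, hp1, hx, fun k => ?_, ?_⟩
  · simpa using hy k
  · rw [partialTransposeB_sum_smul_kronecker]
    simp_rw [transpose_vecProjector]

end SeparableState

theorem peres_ppt_criterion_general (dA dB : ℕ)
    (ρ : Matrix (Fin dA × Fin dB) (Fin dA × Fin dB) ℂ)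
    (hsep : SeparableState ρ) :
    (partialTransposeA ρ).PosSemidef ∧ (partialTransposeB ρ).PosSemidef :=
  ⟨hsep.partialTransposeA.posSemidef, hsep.partialTransposeB.posSemidef⟩

/-- **Peres partial transposition criterion.** If `ρ` is a separable density matrix on
`ℂ^{d_A} ⊗ ℂ^{d_B}`, then both partial transpositions `ρ^{T_A}` and `ρ^{T_B}` are positive
semidefinite. -/
theorem peres_ppt_criterion (dA dB : ℕ)
    (ρ : Matrix (Fin dA × Fin dB) (Fin dA × Fin dB) ℂ)
    (hpsd : ρ.PosSemidef) (htr : ρ.trace = 1) (hsep : SeparableState ρ) :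
    (partialTransposeA ρ).PosSemidef ∧ (partialTransposeB ρ).PosSemidef :=
  peres_ppt_criterion_general dA dB ρ hsep
end

section
/- Existence of entanglement witnesses: Let ρ be an entangled density matrix on ℂ^{d_A} ⊗ ℂ^{d_B}. Then there exists a Hermitian matrix W indexed by Fin d_A × Fin d_B such that the (real) trace tr(Wρ) satisfies Re tr(Wρ) < 0, while Re tr(Wσ) ≥ 0 for every separable density matrix σ on ℂ^{d_A} ⊗ ℂ^{d_B}. -/
/-!
Separable states form the convex hull of the product states `(x x*) ⊗ (y y*)` with `x`, `y` unit
vectors. These form a compact set (a continuous image of a product of spheres), so by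
Carathéodory's theorem their convex hull is compact, in particular closed. Hahn–Banach then
separates an entangled `ρ` from it by a real-linear functional `f` and a level `u`;
`f - u · Re tr` is again real-linear, and every real-linear functional on Hermitian matrices is
of the form `M ↦ Re tr(W M)` with `W` Hermitian.
-/

open scoped BigOperators ComplexOrder

open Set in
theorem IsCompact.convexHull {E : Type*} [AddCommGroup E] [Module ℝ E] [TopologicalSpace E]
    [IsTopologicalAddGroup E] [ContinuousSMul ℝ E] [FiniteDimensional ℝ E] {s : Set E}
    (hs : IsCompact s) : IsCompact (convexHull ℝ s) := by
  let combination (k : ℕ) (q : (Fin k → ℝ) × (Fin k → E)) : E := ∑ i, q.1 i • q.2 i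
  -- Carathéodory: combinations of at most `finrank ℝ E + 1` points of `s` suffice.
  suffices _root_.convexHull ℝ s = ⋃ k ∈ Finset.range (Module.finrank ℝ E + 2),
      combination k '' (stdSimplex ℝ (Fin k) ×ˢ univ.pi fun _ => s) by
    rw [this]
    exact Finset.isCompact_biUnion _ fun k _ =>
      ((isCompact_stdSimplex ℝ _).prod (isCompact_univ_pi fun _ => hs)).image (by fun_prop)
  refine Subset.antisymm (fun x hx => ?_) ?_
  · obtain ⟨ι, _, z, w, hzs, hz, hw₀, hw₁, rfl⟩ := eq_pos_convex_span_of_mem_convexHull hx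
    have hcard : Fintype.card ι < Module.finrank ℝ E + 2 :=
      Nat.lt_succ_of_le (hz.card_le_finrank_succ.trans (by gcongr; exact Submodule.finrank_le _))
    let e := (Fintype.equivFin ι).symm
    refine mem_biUnion (Finset.mem_range.2 hcard) ⟨(w ∘ e, z ∘ e), ⟨⟨fun i => (hw₀ _).le, ?_⟩,
      fun i _ => hzs (mem_range_self _)⟩, e.sum_comp fun i => w i • z i⟩
    exact (e.sum_comp w).trans hw₁
  · simp only [iUnion_subset_iff, Set.image_subset_iff]
    rintro k - ⟨w, z⟩ ⟨⟨hw₀, hw₁⟩, hz⟩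
    exact (convex_convexHull ℝ s).sum_mem (fun i _ => hw₀ i) hw₁
      fun i _ => subset_convexHull ℝ s (hz i trivial)

namespace Matrix

instance {m n E : Type*} [Fintype m] [Fintype n] [SeminormedAddCommGroup E] [NormedSpace ℝ E] :
    LocallyConvexSpace ℝ (Matrix m n E) :=
  inferInstanceAs (LocallyConvexSpace ℝ (m → n → E))

variable {n : Type*} [Fintype n] [DecidableEq n]

theorem exists_trace_mul_eq {R : Type*} [CommSemiring R] (g : Matrix n n R →ₗ[R] R) :
    ∃ C : Matrix n n R, ∀ M, g M = (C * M).trace := by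
  refine ⟨of fun j i => g (single i j 1), fun M => ?_⟩
  induction M using Matrix.induction_on' with
  | h_zero => simp
  | h_add p q hp hq => rw [map_add, hp, hq, mul_add, trace_add]
  | h_std_basis i j x =>
    rw [trace_mul_single, ← mul_one x, ← smul_eq_mul, ← smul_single, map_smul]
    simp [mul_comm]

theorem exists_isHermitian_re_trace_mul_eq (f : Module.Dual ℝ (Matrix n n ℂ)) :
    ∃ W : Matrix n n ℂ, W.IsHermitian ∧ ∀ M : Matrix n n ℂ, M.IsHermitian →
      (W * M).trace.re = f M := by
  obtain ⟨C, hC⟩ := exists_trace_mul_eq (f.extendRCLike (𝕜 := ℂ))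
  have hre M : (C * M).trace.re = f M := by
    rw [← hC]; exact Module.Dual.re_extendRCLike_apply (𝕜 := ℂ) f M
  refine ⟨(2⁻¹ : ℝ) • (C + Cᴴ), ?_, fun M hM => ?_⟩
  · exact ((IsSelfAdjoint.all (2⁻¹ : ℝ)).smul (IsSelfAdjoint.add_star_self C) : _)
  · have hconj : (Cᴴ * M).trace = star (C * M).trace := by
      rw [← trace_conjTranspose, conjTranspose_mul, hM.eq, trace_mul_comm]
    rw [smul_mul, add_mul, trace_smul, trace_add, hconj, Complex.smul_re, Complex.add_re,
      Complex.star_def, Complex.conj_re, hre, smul_eq_mul]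
    ring

end Matrix

theorem isCompact_setOf_sum_normSq_eq_one (ι : Type*) [Fintype ι] :
    IsCompact {x : ι → ℂ | ∑ a, Complex.normSq (x a) = 1} := by
  refine Metric.isCompact_of_isClosed_isBounded (isClosed_eq (by fun_prop) continuous_const)
    ((Metric.isBounded_closedBall (x := 0) (r := 1)).subset fun x hx => ?_)
  rw [mem_closedBall_zero_iff, pi_norm_le_iff_of_nonneg zero_le_one]
  intro a
  have : ‖x a‖ ^ 2 ≤ 1 := by
    rw [← Complex.normSq_eq_norm_sq, ← Set.mem_ofPred.1 hx]
    exact Finset.single_le_sum (fun b _ => Complex.normSq_nonneg (x b)) (Finset.mem_univ a)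
  exact (pow_le_one_iff_of_nonneg (norm_nonneg _) two_ne_zero).1 this

def productStates (dA dB : ℕ) : Set (Matrix (Fin dA × Fin dB) (Fin dA × Fin dB) ℂ) :=
  (fun q : (Fin dA → ℂ) × (Fin dB → ℂ) =>
      Matrix.kroneckerMap (· * ·) (vecProjector q.1) (vecProjector q.2)) ''
    ({x | ∑ a, Complex.normSq (x a) = 1} ×ˢ {y | ∑ b, Complex.normSq (y b) = 1})

theorem isCompact_productStates (dA dB : ℕ) : IsCompact (productStates dA dB) :=
  ((isCompact_setOf_sum_normSq_eq_one _).prod (isCompact_setOf_sum_normSq_eq_one _)).image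
    (continuous_matrix fun _ _ => by simp only [Matrix.kroneckerMap_apply, vecProjector]; fun_prop)

theorem separableState_iff_mem_convexHull {dA dB : ℕ}
    (σ : Matrix (Fin dA × Fin dB) (Fin dA × Fin dB) ℂ) :
    SeparableState σ ↔ σ ∈ convexHull ℝ (productStates dA dB) := by
  simp only [SeparableState, Complex.coe_smul]
  constructor
  · rintro ⟨K, p, x, y, hp₀, hp₁, hx, hy, rfl⟩
    exact mem_convexHull_of_exists_fintype p _ hp₀ hp₁
      (fun k => ⟨(x k, y k), ⟨hx k, hy k⟩, rfl⟩) rfl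
  · rw [mem_convexHull_iff_exists_fintype]
    rintro ⟨ι, _, w, z, hw₀, hw₁, hz, rfl⟩
    choose q hq hqz using hz
    let e := (Fintype.equivFin ι).symm
    refine ⟨Fintype.card ι, w ∘ e, fun k => (q (e k)).1, fun k => (q (e k)).2, fun k => hw₀ _,
      (e.sum_comp w).trans hw₁, fun k => (hq _).1, fun k => (hq _).2, ?_⟩
    rw [← e.sum_comp]
    simp [hqz]

/-- **Existence of entanglement witnesses.** For every entangled density matrix `ρ` on
`ℂ^{d_A} ⊗ ℂ^{d_B}` there is a Hermitian matrix `W` with `Re tr(Wρ) < 0` while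
`Re tr(Wσ) ≥ 0` for every separable density matrix `σ`. -/
theorem exists_entanglement_witness (dA dB : ℕ)
    (ρ : Matrix (Fin dA × Fin dB) (Fin dA × Fin dB) ℂ)
    (hpsd : ρ.PosSemidef) (htr : ρ.trace = 1) (hent : ¬ SeparableState ρ) :
    ∃ W : Matrix (Fin dA × Fin dB) (Fin dA × Fin dB) ℂ,
      W.IsHermitian ∧ ((W * ρ).trace).re < 0 ∧
      ∀ σ : Matrix (Fin dA × Fin dB) (Fin dA × Fin dB) ℂ,
        σ.PosSemidef → σ.trace = 1 → SeparableState σ → 0 ≤ ((W * σ).trace).re := by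
  obtain ⟨f, u, hfρ, hfsep⟩ := geometric_hahn_banach_point_closed (convex_convexHull ℝ _)
    (isCompact_productStates dA dB).convexHull.isClosed
    (mt (separableState_iff_mem_convexHull ρ).2 hent)
  obtain ⟨W, hW, hWf⟩ := Matrix.exists_isHermitian_re_trace_mul_eq
    (f.toLinearMap - u • Complex.reLm ∘ₗ Matrix.traceLinearMap _ ℝ ℂ)
  have hW_density M (hM : M.IsHermitian) (hM₁ : M.trace = 1) : ((W * M).trace).re = f M - u := by
    simp [hWf M hM, hM₁]
  refine ⟨W, hW, ?_, fun σ hσ hσ₁ hσsep => ?_⟩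
  · rw [hW_density ρ hpsd.1 htr]
    linarith
  · rw [hW_density σ hσ.1 hσ₁]
    linarith [hfsep σ ((separableState_iff_mem_convexHull σ).1 hσsep)]
end

section
/- Decomposable maps cannot detect PPT entangled states: Let ρ be a density matrix on ℂ^{d_A} ⊗ ℂ^{d_B} whose partial transposition ρ^{T_B} is positive semidefinite, and let Λ be a decomposable positive map from d_B × d_B matrices to d_A × d_A matrices, i.e. Λ = Λ₁ + Λ₂ ∘ T where Λ₁, Λ₂ are completely positive and T is the transposition map. Then (I_{d_A} ⊗ Λ)(ρ) is positive semidefinite. -/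
open scoped BigOperators ComplexOrder Matrix

/-- The blockwise extension `I_n ⊗ Λ`, defined by
`((I_n ⊗ Λ)(X))_{(i,μ),(j,ν)} = (Λ(X^{(i,j)}))_{μν}` where `X^{(i,j)}_{μν} = X_{(i,μ),(j,ν)}`. -/
def extendMap {n d d' : ℕ}
    (Λ : Matrix (Fin d) (Fin d) ℂ →ₗ[ℂ] Matrix (Fin d') (Fin d') ℂ)
    (X : Matrix (Fin n × Fin d) (Fin n × Fin d) ℂ) :
    Matrix (Fin n × Fin d') (Fin n × Fin d') ℂ :=
  fun p q => Λ (Matrix.of fun μ ν => X (p.1, μ) (q.1, ν)) p.2 q.2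

/-- A linear map `Λ` is completely positive if, for every `n ≥ 1`, the extension `I_n ⊗ Λ`
maps positive semidefinite matrices to positive semidefinite matrices. -/
def CompletelyPositive {d d' : ℕ}
    (Λ : Matrix (Fin d) (Fin d) ℂ →ₗ[ℂ] Matrix (Fin d') (Fin d') ℂ) : Prop :=
  ∀ n : ℕ, 1 ≤ n →
    ∀ X : Matrix (Fin n × Fin d) (Fin n × Fin d) ℂ,
      X.PosSemidef → (extendMap (n := n) Λ X).PosSemidef

/-- **Decomposable maps cannot detect PPT entangled states.** If `ρ` is a density matrix
with positive semidefinite partial transposition `ρ^{T_B}` and `Λ = Λ₁ + Λ₂ ∘ T` is a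
decomposable map (`Λ₁`, `Λ₂` completely positive, `T` the transposition), then
`(I_{d_A} ⊗ Λ)(ρ)` is positive semidefinite. -/
theorem decomposable_map_on_ppt_state (dA dB : ℕ)
    (ρ : Matrix (Fin dA × Fin dB) (Fin dA × Fin dB) ℂ)
    (hpsd : ρ.PosSemidef) (htr : ρ.trace = 1)
    (hppt : (partialTransposeB ρ).PosSemidef)
    (Λ Λ₁ Λ₂ : Matrix (Fin dB) (Fin dB) ℂ →ₗ[ℂ] Matrix (Fin dA) (Fin dA) ℂ)
    (hΛ₁ : CompletelyPositive Λ₁) (hΛ₂ : CompletelyPositive Λ₂)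
    (hdec : ∀ X : Matrix (Fin dB) (Fin dB) ℂ, Λ X = Λ₁ X + Λ₂ Xᵀ) :
    (extendMap Λ ρ).PosSemidef := by
  have hdA : 1 ≤ dA := by
    by_contra h
    push_neg at h
    interval_cases dA
    simp [Matrix.trace] at htr
  have hkey : extendMap Λ ρ = extendMap Λ₁ ρ + extendMap Λ₂ (partialTransposeB ρ) := by
    funext p q
    simp only [extendMap, Matrix.add_apply, hdec]
    rfl
  rw [hkey]
  exact (hΛ₁ dA hdA ρ hpsd).add (hΛ₂ dA hdA _ hppt)
end

section
/- The reduction map Λ_r, defined on d × d complex matrices by Λ_r(X) = tr(X)·I_d − X, is a positive map (it maps positive semidefinite matrices to positive semidefinite matrices), but for d ≥ 2 it is not completely positive: the matrix (I_d ⊗ Λ_r)(P₊^{(d)}) = (1/d)·I_{d²} − P₊^{(d)} is not positive semidefinite. -/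
/-!
For `X ⪰ 0` the trace is the sum of the nonnegative eigenvalues of `X`, so it dominates each
of them; diagonalising `X`, this is exactly `tr(X)·I - X ⪰ 0`. The `(i, j)` block of `P₊` is
`(1/d)·E_{ij}`, of trace `δ_{ij}/d`, whence `(I_d ⊗ Λ_r)(P₊) = (1/d)·I - P₊`. The vector
`∑ i, e_i ⊗ e_i` is fixed by `P₊`, so the quadratic form of `(1/d)·I - P₊` at it has the sign
of `1/d - 1 < 0`.
-/
open scoped BigOperators ComplexOrder Matrix

/-- The reduction map `Λ_r(X) = tr(X)·I_d − X`. -/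
noncomputable def reductionMap (d : ℕ) :
    Matrix (Fin d) (Fin d) ℂ →ₗ[ℂ] Matrix (Fin d) (Fin d) ℂ where
  toFun X := X.trace • (1 : Matrix (Fin d) (Fin d) ℂ) - X
  map_add' X Y := by
    simp only [Matrix.trace_add, add_smul]
    abel
  map_smul' c X := by
    simp [Matrix.trace_smul, smul_sub, smul_smul]

/-- The projector `P₊^{(d)}` onto the maximally entangled vector
`ψ₊ = (1/√d) ∑ i, e_i ⊗ e_i`, with entries `(P₊)_{(i,μ),(j,ν)} = (1/d)·δ_{iμ}·δ_{jν}`. -/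
noncomputable def maxEntProj (d : ℕ) : Matrix (Fin d × Fin d) (Fin d × Fin d) ℂ :=
  fun p q => if p.1 = p.2 ∧ q.1 = q.2 then 1 / (d : ℂ) else 0

namespace Matrix
variable {n 𝕜 : Type*} [Fintype n] [RCLike 𝕜] {A : Matrix n n 𝕜}

theorem IsHermitian.posSemidef_smul_one_sub_of_eigenvalues_le [DecidableEq n]
    (hA : A.IsHermitian) {c : ℝ} (hc : ∀ i, hA.eigenvalues i ≤ c) :
    ((c : 𝕜) • (1 : Matrix n n 𝕜) - A).PosSemidef := by
  set U : Matrix n n 𝕜 := (hA.eigenvectorUnitary : Matrix n n 𝕜)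
  have hU : U * star U = 1 := Unitary.mul_star_self_of_mem hA.eigenvectorUnitary.2
  have hdiag : diagonal (fun i => ((c - hA.eigenvalues i : ℝ) : 𝕜)) =
      (c : 𝕜) • 1 - diagonal (RCLike.ofReal ∘ hA.eigenvalues) := by
    rw [smul_one_eq_diagonal, diagonal_sub]
    simp
  have hconj : (c : 𝕜) • (1 : Matrix n n 𝕜) - A =
      U * diagonal (fun i => ((c - hA.eigenvalues i : ℝ) : 𝕜)) * star U := by
    conv_lhs => rw [hA.spectral_theorem]
    rw [hdiag, mul_sub, sub_mul, mul_smul_comm, mul_one, smul_mul_assoc, hU,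
      Unitary.conjStarAlgAut_apply]
  rw [hconj, IsUnit.posSemidef_star_right_conjugate_iff Unitary.isUnit_coe,
    posSemidef_diagonal_iff]
  exact fun i => RCLike.ofReal_nonneg.mpr (sub_nonneg.mpr (hc i))

theorem PosSemidef.trace_smul_one_sub [DecidableEq n] (hA : A.PosSemidef) :
    (A.trace • (1 : Matrix n n 𝕜) - A).PosSemidef := by
  have htrace : A.trace = ((∑ i, hA.1.eigenvalues i : ℝ) : 𝕜) := by
    rw [hA.1.trace_eq_sum_eigenvalues]
    push_cast
    rfl
  rw [htrace]
  exact hA.1.posSemidef_smul_one_sub_of_eigenvalues_le fun i =>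
    Finset.single_le_sum (fun j _ => hA.eigenvalues_nonneg j) (Finset.mem_univ i)

theorem PosSemidef.le_of_mulVec_eq_smul [DecidableEq n] {c μ : ℝ}
    (h : ((c : 𝕜) • (1 : Matrix n n 𝕜) - A).PosSemidef) {v : n → 𝕜} (hv : v ≠ 0)
    (hAv : A *ᵥ v = (μ : 𝕜) • v) : μ ≤ c := by
  have hform := h.re_dotProduct_nonneg v
  rw [sub_mulVec, smul_mulVec, one_mulVec, hAv, ← sub_smul, dotProduct_smul, smul_eq_mul,
    ← RCLike.ofReal_sub, RCLike.re_ofReal_mul] at hform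
  have hvv : 0 < RCLike.re (star v ⬝ᵥ v) :=
    (RCLike.pos_iff.mp (dotProduct_star_self_pos_iff.mpr hv)).1
  exact sub_nonneg.mp (nonneg_of_mul_nonneg_left hform hvv)

end Matrix

theorem reductionMap_apply (d : ℕ) (X : Matrix (Fin d) (Fin d) ℂ) :
    reductionMap d X = X.trace • 1 - X := rfl

theorem extendMap_reductionMap_apply {n d : ℕ} (X : Matrix (Fin n × Fin d) (Fin n × Fin d) ℂ)
    (i j : Fin n) (μ ν : Fin d) :
    extendMap (reductionMap d) X (i, μ) (j, ν) =
      (if μ = ν then ∑ κ, X (i, κ) (j, κ) else 0) - X (i, μ) (j, ν) := by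
  simp [extendMap, reductionMap_apply, Matrix.trace, Matrix.one_apply]

/-- `√d · ψ₊`; leaving it unnormalised avoids square roots. -/
def maxEntVec (d : ℕ) : Fin d × Fin d → ℂ := fun p => if p.1 = p.2 then 1 else 0

theorem maxEntVec_ne_zero {d : ℕ} (hd : d ≠ 0) : maxEntVec d ≠ 0 := by
  intro h
  have := congrFun h (⟨0, by omega⟩, ⟨0, by omega⟩)
  simp [maxEntVec] at this

theorem maxEntProj_mulVec_maxEntVec {d : ℕ} (hd : d ≠ 0) :
    maxEntProj d *ᵥ maxEntVec d = maxEntVec d := by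
  ext ⟨i, μ⟩
  by_cases h : i = μ
  · simp [Matrix.mulVec, dotProduct, maxEntProj, maxEntVec, h, Fintype.sum_prod_type, hd]
  · simp [Matrix.mulVec, dotProduct, maxEntProj, maxEntVec, h]

theorem sum_maxEntProj_apply {d : ℕ} (i j : Fin d) :
    ∑ κ, maxEntProj d (i, κ) (j, κ) = if i = j then 1 / (d : ℂ) else 0 := by
  by_cases h : i = j
  · subst h; simp [maxEntProj]
  · rw [if_neg h]
    exact Finset.sum_eq_zero fun κ _ =>
      if_neg fun hκ : i = κ ∧ j = κ => h (hκ.1.trans hκ.2.symm)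

theorem extendMap_reductionMap_maxEntProj (d : ℕ) :
    extendMap (reductionMap d) (maxEntProj d) =
      (1 / (d : ℂ)) • (1 : Matrix (Fin d × Fin d) (Fin d × Fin d) ℂ) - maxEntProj d := by
  ext ⟨i, μ⟩ ⟨j, ν⟩
  rw [extendMap_reductionMap_apply, sum_maxEntProj_apply]
  by_cases hij : i = j <;> by_cases hμν : μ = ν <;> simp [hij, hμν]

/-- **The reduction map is positive but not completely positive.** `Λ_r(X) = tr(X)·I − X`
maps positive semidefinite matrices to positive semidefinite matrices, but for `d ≥ 2`
the matrix `(I_d ⊗ Λ_r)(P₊^{(d)}) = (1/d)·I_{d²} − P₊^{(d)}` is not positive semidefinite. -/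
theorem reductionMap_positive_not_completelyPositive (d : ℕ) (hd : 2 ≤ d) :
    (∀ X : Matrix (Fin d) (Fin d) ℂ, X.PosSemidef → (reductionMap d X).PosSemidef) ∧
    extendMap (n := d) (reductionMap d) (maxEntProj d) =
      (1 / (d : ℂ)) • (1 : Matrix (Fin d × Fin d) (Fin d × Fin d) ℂ) - maxEntProj d ∧
    ¬ (extendMap (n := d) (reductionMap d) (maxEntProj d)).PosSemidef := by
  refine ⟨fun X hX => hX.trace_smul_one_sub, extendMap_reductionMap_maxEntProj d, ?_⟩
  intro hpos
  have hd0 : d ≠ 0 := by omega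
  have hcoe : (1 / (d : ℂ)) = ((1 / d : ℝ) : ℂ) := by push_cast; rfl
  rw [extendMap_reductionMap_maxEntProj, hcoe] at hpos
  have hle : (1 : ℝ) ≤ 1 / d := hpos.le_of_mulVec_eq_smul (maxEntVec_ne_zero hd0)
    (by simp [maxEntProj_mulVec_maxEntVec hd0])
  have hd2 : (2 : ℝ) ≤ d := by exact_mod_cast hd
  rw [le_div_iff₀ (by positivity)] at hle
  linarith
end

section
/- Area law for mutual information of classical Gibbs states: Let Ā, ∂B, B̄ be finite types, let b, d be natural numbers with d ≥ 1, and let the boundary type be ∂A = (Fin b → Fin d). Let p be a probability mass function on Ā × ∂A × ∂B × B̄ (nonnegative, summing to 1). Assume the Markov factorization properties: (i) for all (a,x,y,c): p(a,x,y,c) · m_{∂A}(x) = m_{Ā∂A}(a,x) · m_{∂A∂B B̄}(x,y,c), and (ii) for all (x,y,c): m_{∂A∂B B̄}(x,y,c) · m_{∂B}(y) = m_{∂A∂B}(x,y) · m_{∂B B̄}(y,c), where each m denotes the corresponding marginal of p. Then the mutual information between the grouped variables A = (Ā, ∂A) and B = (∂B, B̄) satisfies I(A:B) ≤ b · log d.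 -/
open scoped BigOperators
open Real

/-- Entropy is subadditive: merging cells can only decrease `∑ negMulLog`. -/
lemma negMulLog_sum_le' {ι : Type*} (s : Finset ι) (f : ι → ℝ) (hf : ∀ i ∈ s, 0 ≤ f i) :
    Real.negMulLog (∑ i ∈ s, f i) ≤ ∑ i ∈ s, Real.negMulLog (f i) := by
  set S := ∑ i ∈ s, f i with hS
  have hS0 : 0 ≤ S := Finset.sum_nonneg hf
  have key : ∀ i ∈ s, -(f i * Real.log S) ≤ Real.negMulLog (f i) := by
    intro i hi
    rcases eq_or_lt_of_le (hf i hi) with h0 | h0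
    · simp [← h0, Real.negMulLog]
    · have hfS : f i ≤ S := Finset.single_le_sum hf hi
      have : Real.log (f i) ≤ Real.log S := Real.log_le_log h0 hfS
      have := mul_le_mul_of_nonneg_left this (hf i hi)
      simp only [Real.negMulLog, neg_mul]
      linarith
  calc Real.negMulLog S = -(S * Real.log S) := by simp [Real.negMulLog]
    _ = ∑ i ∈ s, -(f i * Real.log S) := by rw [hS]; rw [Finset.sum_mul] at *; simp [Finset.sum_neg_distrib]
    _ ≤ ∑ i ∈ s, Real.negMulLog (f i) := Finset.sum_le_sum key

/-- Entropy of a distribution on a finite type is at most log of the cardinality. -/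
lemma sum_negMulLog_le_log_card' {ι : Type*} [Fintype ι] (f : ι → ℝ)
    (hf : ∀ i, 0 ≤ f i) (hf1 : ∑ i, f i = 1) :
    ∑ i, Real.negMulLog (f i) ≤ Real.log (Fintype.card ι) := by
  have hne : (Fintype.card ι : ℝ) ≠ 0 := by
    have : 0 < Fintype.card ι := Fintype.card_pos_iff.mpr (by
      by_contra h
      rw [not_nonempty_iff] at h
      simp [Finset.univ_eq_empty] at hf1)
    positivity
  have jensen := Real.concaveOn_negMulLog.le_map_sum
    (t := (Finset.univ : Finset ι)) (w := fun _ => (Fintype.card ι : ℝ)⁻¹)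
    (p := f) (fun i _ => by positivity)
    (by simp [Finset.card_univ]; field_simp)
    (fun i _ => hf i)
  simp only [smul_eq_mul] at jensen
  have h2 : ∑ i : ι, (Fintype.card ι : ℝ)⁻¹ * f i = (Fintype.card ι : ℝ)⁻¹ := by
    rw [← Finset.mul_sum, hf1, mul_one]
  rw [h2, ← Finset.mul_sum] at jensen
  have h3 : Real.negMulLog (Fintype.card ι : ℝ)⁻¹
      = (Fintype.card ι : ℝ)⁻¹ * Real.log (Fintype.card ι) := by
    simp [Real.negMulLog, Real.log_inv]
  rw [h3] at jensen
  have := mul_le_mul_of_nonneg_left jensen (by positivity : (0:ℝ) ≤ (Fintype.card ι : ℝ))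
  rw [← mul_assoc, ← mul_assoc, mul_inv_cancel₀ hne, one_mul, one_mul] at this
  exact this

/-- **Area law for mutual information of classical Gibbs states.**
Let the system consist of four groups of variables `Ā`, `∂A = Fin b → Fin d`, `∂B`, `B̄`,
with joint probability mass function `p`. Under the two Markov factorization properties
(`∂A` separates `Ā` from `(∂B, B̄)`, and `∂B` separates `(Ā, ∂A)` from `B̄`), the mutual
information between `A = (Ā, ∂A)` and `B = (∂B, B̄)` is at most `b · log d`. -/
theorem classical_gibbs_mutual_information_area_law
    (Abar dB Bbar : Type*) [Fintype Abar] [Fintype dB] [Fintype Bbar]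
    (b d : ℕ) (hd : 1 ≤ d)
    (p : Abar × (Fin b → Fin d) × dB × Bbar → ℝ)
    (hp0 : ∀ q, 0 ≤ p q) (hp1 : ∑ q, p q = 1)
    -- Markov property (i): p(a,x,y,c) · m_{∂A}(x) = m_{Ā∂A}(a,x) · m_{∂A∂B B̄}(x,y,c)
    (hMarkov1 : ∀ (a : Abar) (x : Fin b → Fin d) (y : dB) (c : Bbar),
      p (a, x, y, c) * (∑ a' : Abar, ∑ y' : dB, ∑ c' : Bbar, p (a', x, y', c')) =
        (∑ y' : dB, ∑ c' : Bbar, p (a, x, y', c')) *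
          (∑ a' : Abar, p (a', x, y, c)))
    -- Markov property (ii): m_{∂A∂B B̄}(x,y,c) · m_{∂B}(y) = m_{∂A∂B}(x,y) · m_{∂B B̄}(y,c)
    (hMarkov2 : ∀ (x : Fin b → Fin d) (y : dB) (c : Bbar),
      (∑ a' : Abar, p (a', x, y, c)) *
          (∑ a' : Abar, ∑ x' : Fin b → Fin d, ∑ c' : Bbar, p (a', x', y, c')) =
        (∑ a' : Abar, ∑ c' : Bbar, p (a', x, y, c')) *
          (∑ a' : Abar, ∑ x' : Fin b → Fin d, p (a', x', y, c))) :
    -- I(A : B) = H(p_A) + H(p_B) − H(p) ≤ b · log d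
    (∑ a : Abar, ∑ x : Fin b → Fin d,
        Real.negMulLog (∑ y : dB, ∑ c : Bbar, p (a, x, y, c))) +
      (∑ y : dB, ∑ c : Bbar,
        Real.negMulLog (∑ a : Abar, ∑ x : Fin b → Fin d, p (a, x, y, c))) -
      (∑ q, Real.negMulLog (p q)) ≤ (b : ℝ) * Real.log d := by
  classical
  -- marginals
  set m1 : Abar → (Fin b → Fin d) → ℝ := fun a x => ∑ y, ∑ c, p (a, x, y, c) with hm1
  set m2 : (Fin b → Fin d) → dB → Bbar → ℝ := fun x y c => ∑ a, p (a, x, y, c) with hm2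
  set mx : (Fin b → Fin d) → ℝ := fun x => ∑ a, ∑ y, ∑ c, p (a, x, y, c) with hmx
  set mB : dB → Bbar → ℝ := fun y c => ∑ a, ∑ x, p (a, x, y, c) with hmB
  have expand : ∀ g : Abar × (Fin b → Fin d) × dB × Bbar → ℝ,
      ∑ q, g q = ∑ a, ∑ x, ∑ y, ∑ c, g (a, x, y, c) := by
    intro g
    rw [Fintype.sum_prod_type]
    refine Finset.sum_congr rfl fun a _ => ?_
    rw [Fintype.sum_prod_type]
    exact Finset.sum_congr rfl fun x _ => Fintype.sum_prod_type _
  have swapA : ∀ h : Abar → (Fin b → Fin d) → dB → Bbar → ℝ,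
      ∑ a, ∑ x, ∑ y, ∑ c, h a x y c = ∑ x, ∑ y, ∑ c, ∑ a, h a x y c := by
    intro h
    rw [Finset.sum_comm]
    refine Finset.sum_congr rfl fun x _ => ?_
    rw [Finset.sum_comm]
    exact Finset.sum_congr rfl fun y _ => Finset.sum_comm
  -- basic facts
  have hm1_nonneg : ∀ a x, 0 ≤ m1 a x := fun a x =>
    Finset.sum_nonneg fun _ _ => Finset.sum_nonneg fun _ _ => hp0 _
  have hm2_nonneg : ∀ x y c, 0 ≤ m2 x y c := fun x y c =>
    Finset.sum_nonneg fun _ _ => hp0 _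
  have hmx_eq1 : ∀ x : Fin b → Fin d, mx x = ∑ a, m1 a x := fun x => rfl
  have hmx_eq2 : ∀ x : Fin b → Fin d, mx x = ∑ y, ∑ c, m2 x y c := by
    intro x
    show ∑ a, ∑ y, ∑ c, p (a, x, y, c) = ∑ y, ∑ c, ∑ a, p (a, x, y, c)
    rw [Finset.sum_comm]
    exact Finset.sum_congr rfl fun y _ => Finset.sum_comm
  have hmB_eq : ∀ y c, mB y c = ∑ x, m2 x y c := fun y c => Finset.sum_comm
  have hmx_sum : ∑ x, mx x = 1 := by
    rw [← hp1, expand, Finset.sum_comm]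
  have hmx_nonneg : ∀ x, 0 ≤ mx x := fun x =>
    Finset.sum_nonneg fun _ _ => hm1_nonneg _ _ |>.trans_eq rfl
  -- pointwise chain-rule identity
  have point : ∀ (a : Abar) (x : Fin b → Fin d) (y : dB) (c : Bbar),
      Real.negMulLog (p (a, x, y, c)) =
        p (a, x, y, c) * Real.log (mx x) - p (a, x, y, c) * Real.log (m1 a x)
          - p (a, x, y, c) * Real.log (m2 x y c) := by
    intro a x y c
    rcases eq_or_lt_of_le (hp0 (a, x, y, c)) with h0 | h0
    · simp [← h0]
    · have hle1 : p (a, x, y, c) ≤ m1 a x := by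
        have h1 : p (a, x, y, c) ≤ ∑ c', p (a, x, y, c') :=
          Finset.single_le_sum (f := fun c' => p (a, x, y, c'))
            (fun c' _ => hp0 _) (Finset.mem_univ c)
        have h2 : (∑ c', p (a, x, y, c')) ≤ m1 a x :=
          Finset.single_le_sum (f := fun y' => ∑ c', p (a, x, y', c'))
            (fun y' _ => Finset.sum_nonneg fun _ _ => hp0 _) (Finset.mem_univ y)
        linarith
      have hle2 : p (a, x, y, c) ≤ m2 x y c :=
        Finset.single_le_sum (f := fun a' => p (a', x, y, c))
          (fun _ _ => hp0 _) (Finset.mem_univ a)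
      have hlex : p (a, x, y, c) ≤ mx x := by
        have := Finset.single_le_sum (f := fun a' => ∑ y', ∑ c', p (a', x, y', c'))
          (fun _ _ => Finset.sum_nonneg fun _ _ => Finset.sum_nonneg fun _ _ => hp0 _)
          (Finset.mem_univ a)
        exact hle1.trans this
      have h1 : 0 < m1 a x := lt_of_lt_of_le h0 hle1
      have h2 : 0 < m2 x y c := lt_of_lt_of_le h0 hle2
      have hx0 : 0 < mx x := lt_of_lt_of_le h0 hlex
      have hm : p (a, x, y, c) * mx x = m1 a x * m2 x y c := hMarkov1 a x y c
      have hlog : Real.log (p (a, x, y, c)) + Real.log (mx x)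
          = Real.log (m1 a x) + Real.log (m2 x y c) := by
        rw [← Real.log_mul (ne_of_gt h0) (ne_of_gt hx0),
          ← Real.log_mul (ne_of_gt h1) (ne_of_gt h2), hm]
      simp only [Real.negMulLog, neg_mul]
      nlinarith [hlog]
  -- chain rule for entropy
  have hchain : ∑ q, Real.negMulLog (p q) =
      (∑ a, ∑ x, Real.negMulLog (m1 a x)) + (∑ x, ∑ y, ∑ c, Real.negMulLog (m2 x y c))
        - ∑ x, Real.negMulLog (mx x) := by
    have e1 : ∑ q, Real.negMulLog (p q)
        = (∑ a, ∑ x, ∑ y, ∑ c, p (a, x, y, c) * Real.log (mx x))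
          - (∑ a, ∑ x, ∑ y, ∑ c, p (a, x, y, c) * Real.log (m1 a x))
          - (∑ a, ∑ x, ∑ y, ∑ c, p (a, x, y, c) * Real.log (m2 x y c)) := by
      rw [expand]
      simp only [← Finset.sum_sub_distrib]
      exact Finset.sum_congr rfl fun a _ => Finset.sum_congr rfl fun x _ =>
        Finset.sum_congr rfl fun y _ => Finset.sum_congr rfl fun c _ => point a x y c
    have t1 : ∑ a, ∑ x, ∑ y, ∑ c, p (a, x, y, c) * Real.log (mx x)
        = ∑ x, mx x * Real.log (mx x) := by
      rw [Finset.sum_comm]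
      refine Finset.sum_congr rfl fun x _ => ?_
      rw [hmx_eq1, Finset.sum_mul]
      exact Finset.sum_congr rfl fun a _ => by
        rw [hm1]; rw [Finset.sum_mul]
        exact Finset.sum_congr rfl fun y _ => (Finset.sum_mul _ _ _).symm
    have t2 : ∑ a, ∑ x, ∑ y, ∑ c, p (a, x, y, c) * Real.log (m1 a x)
        = ∑ a, ∑ x, m1 a x * Real.log (m1 a x) := by
      refine Finset.sum_congr rfl fun a _ => Finset.sum_congr rfl fun x _ => ?_
      rw [hm1]; rw [Finset.sum_mul]
      exact Finset.sum_congr rfl fun y _ => (Finset.sum_mul _ _ _).symm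
    have t3 : ∑ a, ∑ x, ∑ y, ∑ c, p (a, x, y, c) * Real.log (m2 x y c)
        = ∑ x, ∑ y, ∑ c, m2 x y c * Real.log (m2 x y c) := by
      rw [swapA]
      refine Finset.sum_congr rfl fun x _ => Finset.sum_congr rfl fun y _ =>
        Finset.sum_congr rfl fun c _ => ?_
      rw [hm2, Finset.sum_mul]
    rw [e1, t1, t2, t3]
    simp only [Real.negMulLog, neg_mul, Finset.sum_neg_distrib]
    ring
  -- the LHS equals I(∂A : ∂B,B̄)
  have hLHS : (∑ a, ∑ x, Real.negMulLog (m1 a x)) + (∑ y, ∑ c, Real.negMulLog (mB y c))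
      - ∑ q, Real.negMulLog (p q)
      = (∑ y, ∑ c, Real.negMulLog (mB y c)) - (∑ x, ∑ y, ∑ c, Real.negMulLog (m2 x y c))
        + ∑ x, Real.negMulLog (mx x) := by
    rw [hchain]; ring
  have hsub : ∑ y, ∑ c, Real.negMulLog (mB y c) ≤ ∑ x, ∑ y, ∑ c, Real.negMulLog (m2 x y c) := by
    have : ∑ x, ∑ y, ∑ c, Real.negMulLog (m2 x y c)
        = ∑ y, ∑ c, ∑ x, Real.negMulLog (m2 x y c) := by
      rw [Finset.sum_comm]
      exact Finset.sum_congr rfl fun y _ => Finset.sum_comm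
    rw [this]
    refine Finset.sum_le_sum fun y _ => Finset.sum_le_sum fun c _ => ?_
    rw [hmB_eq]
    exact negMulLog_sum_le' _ _ fun x _ => hm2_nonneg x y c
  have hHx : ∑ x, Real.negMulLog (mx x) ≤ (b : ℝ) * Real.log d := by
    have hcard : (Fintype.card (Fin b → Fin d) : ℝ) = (d : ℝ) ^ b := by
      simp [Fintype.card_fun]
    have := sum_negMulLog_le_log_card' mx hmx_nonneg hmx_sum
    rw [hcard, Real.log_pow] at this
    exact this
  calc (∑ a, ∑ x, Real.negMulLog (m1 a x)) + (∑ y, ∑ c, Real.negMulLog (mB y c))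
        - ∑ q, Real.negMulLog (p q)
      = (∑ y, ∑ c, Real.negMulLog (mB y c)) - (∑ x, ∑ y, ∑ c, Real.negMulLog (m2 x y c))
        + ∑ x, Real.negMulLog (mx x) := hLHS
    _ ≤ 0 + (b : ℝ) * Real.log d := by
        have := sub_nonpos.mpr hsub
        linarith [hHx]
    _ = (b : ℝ) * Real.log d := by ring
end

section
/- Gibbs variational principle for matrices: Let H be a Hermitian n × n complex matrix and β > 0, and let ρ_β = exp(−βH)/tr(exp(−βH)) be the thermal state. Then ρ_β minimizes the free energy F(ρ) = Re tr(Hρ) − (1/β)·S(ρ) over all density matrices: for every positive semidefinite matrix ρ with trace 1, Re tr(Hρ_β) − (1/β)·S(ρ_β) ≤ Re tr(Hρ) − (1/β)·S(ρ). -/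
/-!
Writing `ρ_β = exp(−βH) / Z`, its logarithm is `−βH − log Z`, so for every density matrix `ρ`
`β F(ρ) + log Z = −S(ρ) − Re tr(ρ log ρ_β)`, the relative entropy of `ρ` with respect to `ρ_β`.
It is nonnegative by Klein's inequality and vanishes at `ρ = ρ_β`. Klein's inequality reduces to
the scalar inequality `p log q − p log p ≤ q − p` once both matrices are written in their
eigenbases `(uᵢ)`, `(vⱼ)`: the overlaps `|⟪uᵢ, vⱼ⟫|²` form a doubly stochastic matrix.
-/

open scoped BigOperators ComplexOrder

/-- The von Neumann entropy `S(σ) = −∑ λ_i(σ) log λ_i(σ)` of a Hermitian matrix, via its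
(real) eigenvalues; defined to be `0` on non-Hermitian matrices. -/
noncomputable def vonNeumannEntropy {n : Type*} [Fintype n] [DecidableEq n]
    (σ : Matrix n n ℂ) : ℝ :=
  if h : σ.IsHermitian then ∑ i, Real.negMulLog (h.eigenvalues i) else 0

open Real in
theorem Real.mul_log_add_negMulLog_le_sub {p q : ℝ} (hp : 0 ≤ p) (hq : 0 < q) :
    p * log q + negMulLog p ≤ q - p := by
  rcases hp.eq_or_lt with rfl | hp
  · simpa using hq.le
  · have h := mul_le_mul_of_nonneg_left (log_le_sub_one_of_pos (div_pos hq hp)) hp.le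
    rw [log_div hq.ne' hp.ne', mul_sub, mul_sub, mul_div_cancel₀ _ hp.ne', mul_one] at h
    rw [negMulLog]
    linarith

theorem Matrix.IsHermitian.neg_ofReal_smul {n : Type*} {H : Matrix n n ℂ} (hH : H.IsHermitian)
    (β : ℝ) : ((-(β : ℂ)) • H).IsHermitian :=
  hH.smul (by simp [IsSelfAdjoint])

variable {n 𝕜 : Type*} [Fintype n] [DecidableEq n] [RCLike 𝕜]

open Real Finset in
theorem sum_mul_log_add_sum_negMulLog_le_of_mem_doublyStochastic {P : Matrix n n ℝ}
    (hP : P ∈ doublyStochastic ℝ n) {p q : n → ℝ} (hp : ∀ i, 0 ≤ p i) (hq : ∀ j, 0 < q j) :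
    ∑ i, ∑ j, P i j * p i * log (q j) + ∑ i, negMulLog (p i) ≤ ∑ j, q j - ∑ i, p i := by
  obtain ⟨hP0, hrow, hcol⟩ := mem_doublyStochastic_iff_sum.mp hP
  calc ∑ i, ∑ j, P i j * p i * log (q j) + ∑ i, negMulLog (p i)
      = ∑ i, ∑ j, P i j * (p i * log (q j) + negMulLog (p i)) := by
        simp only [mul_add, sum_add_distrib, ← sum_mul, hrow, one_mul, mul_assoc]
    _ ≤ ∑ i, ∑ j, P i j * (q j - p i) := by
        gcongr with i _ j _
        exacts [hP0 i j, mul_log_add_negMulLog_le_sub (hp i) (hq j)]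
    _ = ∑ j, q j - ∑ i, p i := by
        simp only [mul_sub, sum_sub_distrib, ← sum_mul, hrow, one_mul]
        rw [sum_comm]
        simp only [← sum_mul, hcol, one_mul]

namespace Matrix

theorem of_normSq_mem_doublyStochastic {W : Matrix n n ℂ} (hW : W ∈ unitaryGroup n ℂ) :
    of (fun i j => Complex.normSq (W i j)) ∈ doublyStochastic ℝ n := by
  refine mem_doublyStochastic_iff_sum.mpr
    ⟨fun i j => Complex.normSq_nonneg _, fun i => ?_, fun j => ?_⟩
  · have h := congrFun (congrFun (mem_unitaryGroup_iff.mp hW) i) i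
    simp only [mul_apply, star_apply, Complex.star_def, Complex.mul_conj, one_apply_eq] at h
    exact_mod_cast h
  · have h := congrFun (congrFun (mem_unitaryGroup_iff'.mp hW) j) j
    simp only [mul_apply, star_apply, Complex.star_def, mul_comm (starRingEnd ℂ _),
      Complex.mul_conj, one_apply_eq] at h
    exact_mod_cast h

theorem trace_diagonal_mul_diagonal_mul_star (W : Matrix n n ℂ) (a b : n → ℝ) :
    (diagonal (fun i => (a i : ℂ)) * W * diagonal (fun j => (b j : ℂ)) * star W).trace
      = ((∑ i, ∑ j, Complex.normSq (W i j) * a i * b j : ℝ) : ℂ) := by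
  simp only [trace, diag_apply, mul_apply, diagonal_apply, star_apply, ite_mul, zero_mul,
    mul_ite, mul_zero, Finset.sum_ite_eq, Finset.sum_ite_eq', Finset.mem_univ, if_true,
    Complex.star_def]
  push_cast
  refine Finset.sum_congr rfl fun i _ => Finset.sum_congr rfl fun j _ => ?_
  rw [Complex.normSq_eq_conj_mul_self]
  ring

theorem trace_conj_diagonal_mul_conj_diagonal (U V : Matrix n n ℂ) (a b : n → ℝ) :
    (U * diagonal (fun i => (a i : ℂ)) * star U *
        (V * diagonal (fun j => (b j : ℂ)) * star V)).trace
      = ((∑ i, ∑ j, Complex.normSq ((star U * V) i j) * a i * b j : ℝ) : ℂ) := by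
  rw [← trace_diagonal_mul_diagonal_mul_star, star_mul, star_star, mul_assoc U, mul_assoc U,
    trace_mul_comm]
  simp only [mul_assoc]

namespace IsHermitian

theorem trace_cfc {A : Matrix n n 𝕜} (hA : A.IsHermitian) (f : ℝ → ℝ) :
    (cfc f A).trace = ∑ i, (f (hA.eigenvalues i) : 𝕜) := by
  rw [hA.cfc_eq, IsHermitian.cfc, Unitary.conjStarAlgAut_apply, trace_mul_cycle,
    Unitary.coe_star_mul_self, one_mul, trace_diagonal]
  rfl

open scoped MatrixOrder in
theorem posDef_cfc {A : Matrix n n 𝕜} (hA : A.IsHermitian) {f : ℝ → ℝ}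
    (hf : ∀ x ∈ spectrum ℝ A, 0 < f x) : (cfc f A).PosDef :=
  isStrictlyPositive_iff_posDef.mp <|
    (cfc_isStrictlyPositive_iff f A (A.finite_real_spectrum.continuousOn f)).mpr hf

theorem exp_eq_cfc {A : Matrix n n ℂ} (hA : A.IsHermitian) :
    NormedSpace.exp A = cfc Real.exp A := by
  have hinv : (hA.eigenvectorUnitary : Matrix n n ℂ)⁻¹ = star hA.eigenvectorUnitary :=
    inv_eq_left_inv (Unitary.coe_star_mul_self _)
  conv_lhs => rw [hA.spectral_theorem]
  rw [hA.cfc_eq, IsHermitian.cfc, Unitary.conjStarAlgAut_apply, Unitary.conjStarAlgAut_apply,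
    ← Unitary.coe_star, ← hinv, exp_conj _ _ Unitary.isUnit_coe, exp_diagonal]
  congr 3
  ext i
  simp [← Complex.exp_eq_exp_ℂ, Complex.ofReal_exp]

theorem posDef_exp {A : Matrix n n ℂ} (hA : A.IsHermitian) : (NormedSpace.exp A).PosDef :=
  hA.exp_eq_cfc ▸ hA.posDef_cfc fun x _ => Real.exp_pos x

theorem cfc_log_smul_exp {A : Matrix n n ℂ} (hA : A.IsHermitian) {c : ℝ} (hc : 0 < c) :
    cfc Real.log (c • NormedSpace.exp A) = A + algebraMap ℝ _ (Real.log c) := by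
  rw [hA.exp_eq_cfc, ← cfc_const_mul c Real.exp A, ← cfc_comp' Real.log (c * Real.exp ·) A
    (A.finite_real_spectrum.image _ |>.continuousOn _)]
  have hlog : ∀ x, Real.log (c * Real.exp x) = x + Real.log c := fun x => by
    rw [Real.log_mul hc.ne' (Real.exp_pos x).ne', Real.log_exp, add_comm]
  simp only [hlog]
  rw [cfc_add_const (Real.log c) (fun x => x) A, cfc_id' ℝ A]

end IsHermitian

end Matrix

open Matrix

noncomputable def thermalState (β : ℝ) (H : Matrix n n ℂ) : Matrix n n ℂ :=
  ((NormedSpace.exp ((-(β : ℂ)) • H)).trace)⁻¹ • NormedSpace.exp ((-(β : ℂ)) • H)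

namespace Matrix.IsHermitian

variable [Nonempty n] {H : Matrix n n ℂ}

theorem posDef_thermalState (hH : H.IsHermitian) (β : ℝ) : (thermalState β H).PosDef :=
  (hH.neg_ofReal_smul β).posDef_exp.smul (inv_pos.mpr (hH.neg_ofReal_smul β).posDef_exp.trace_pos)

theorem trace_thermalState (hH : H.IsHermitian) (β : ℝ) : (thermalState β H).trace = 1 := by
  rw [thermalState, trace_smul, smul_eq_mul,
    inv_mul_cancel₀ (hH.neg_ofReal_smul β).posDef_exp.trace_pos.ne']

theorem cfc_log_thermalState (hH : H.IsHermitian) (β : ℝ) :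
    cfc Real.log (thermalState β H) = (-(β : ℂ)) • H -
      algebraMap ℝ _ (Real.log (NormedSpace.exp ((-(β : ℂ)) • H)).trace.re) := by
  have hZ := (hH.neg_ofReal_smul β).posDef_exp.trace_pos
  have hZre : (NormedSpace.exp ((-(β : ℂ)) • H)).trace =
      ((NormedSpace.exp ((-(β : ℂ)) • H)).trace.re : ℂ) :=
    Complex.eq_re_of_ofReal_le (r := 0) (by simpa using hZ.le)
  conv_lhs => rw [thermalState, hZre]
  rw [← Complex.ofReal_inv, Complex.coe_smul,
    (hH.neg_ofReal_smul β).cfc_log_smul_exp (inv_pos.mpr (Complex.pos_iff.mp hZ).1),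
    Real.log_inv, map_neg, ← sub_eq_add_neg]

theorem re_trace_mul_cfc_log_thermalState (hH : H.IsHermitian) (β : ℝ) {τ : Matrix n n ℂ}
    (hτ : τ.trace = 1) :
    (τ * cfc Real.log (thermalState β H)).trace.re =
      -β * (H * τ).trace.re - Real.log (NormedSpace.exp ((-(β : ℂ)) • H)).trace.re := by
  rw [hH.cfc_log_thermalState, mul_sub, trace_sub, Algebra.algebraMap_eq_smul_one,
    mul_smul_comm, mul_smul_comm, mul_one, trace_smul, trace_smul, hτ, trace_mul_comm τ H]
  simp

end Matrix.IsHermitian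

theorem vonNeumannEntropy_eq_neg_re_trace_mul_cfc_log {A : Matrix n n ℂ} (hA : A.IsHermitian) :
    vonNeumannEntropy A = -(A * cfc Real.log A).trace.re := by
  have hmul : A * cfc Real.log A = cfc (fun x => x * Real.log x) A := by
    rw [cfc_mul (fun x => x) Real.log A (hg := A.finite_real_spectrum.continuousOn _),
      cfc_id' ℝ A]
  rw [vonNeumannEntropy, dif_pos hA, hmul, hA.trace_cfc]
  simp [Real.negMulLog]

theorem re_trace_mul_cfc_log_add_vonNeumannEntropy_le {ρ σ : Matrix n n ℂ} (hρ : ρ.PosSemidef)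
    (hσ : σ.PosDef) :
    (ρ * cfc Real.log σ).trace.re + vonNeumannEntropy ρ ≤ σ.trace.re - ρ.trace.re := by
  set U : Matrix n n ℂ := (hρ.1.eigenvectorUnitary : Matrix n n ℂ)
  set V : Matrix n n ℂ := (hσ.1.eigenvectorUnitary : Matrix n n ℂ)
  have hρ_eq : ρ = U * diagonal (fun i => (hρ.1.eigenvalues i : ℂ)) * star U := by
    rw [← Unitary.coe_star]
    exact hρ.1.spectral_theorem
  have hlog_eq :
      cfc Real.log σ = V * diagonal (fun j => (Real.log (hσ.1.eigenvalues j) : ℂ)) * star V := by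
    rw [hσ.1.cfc_eq, ← Unitary.coe_star]
    rfl
  have htrace := trace_conj_diagonal_mul_conj_diagonal U V hρ.1.eigenvalues
    (fun j => Real.log (hσ.1.eigenvalues j))
  rw [← hρ_eq, ← hlog_eq] at htrace
  rw [htrace, Complex.ofReal_re, hρ.1.trace_eq_sum_eigenvalues, hσ.1.trace_eq_sum_eigenvalues,
    vonNeumannEntropy, dif_pos hρ.1, Complex.re_sum, Complex.re_sum]
  exact sum_mul_log_add_sum_negMulLog_le_of_mem_doublyStochastic
    (of_normSq_mem_doublyStochastic (star hρ.1.eigenvectorUnitary * hσ.1.eigenvectorUnitary).2)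
    hρ.eigenvalues_nonneg hσ.eigenvalues_pos

/-- **Gibbs variational principle for matrices.** For a Hermitian `H` and `β > 0`, the
thermal state `ρ_β = exp(−βH)/tr(exp(−βH))` minimizes the free energy
`F(ρ) = Re tr(Hρ) − (1/β)·S(ρ)` over all density matrices. -/
theorem gibbs_variational_principle (n : ℕ)
    (H : Matrix (Fin n) (Fin n) ℂ) (hH : H.IsHermitian) (β : ℝ) (hβ : 0 < β)
    (ρβ : Matrix (Fin n) (Fin n) ℂ)
    (hρβ : ρβ = ((NormedSpace.exp ((-(β : ℂ)) • H)).trace)⁻¹ •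
      NormedSpace.exp ((-(β : ℂ)) • H)) :
    ∀ ρ : Matrix (Fin n) (Fin n) ℂ, ρ.PosSemidef → ρ.trace = 1 →
      ((H * ρβ).trace).re - (1 / β) * vonNeumannEntropy ρβ ≤
        ((H * ρ).trace).re - (1 / β) * vonNeumannEntropy ρ := by
  intro ρ hρ htr
  have : Nonempty (Fin n) := by
    by_contra h
    simp [Matrix.trace, not_nonempty_iff.mp h] at htr
  change ρβ = thermalState β H at hρβ
  subst hρβ
  set c := Real.log (NormedSpace.exp ((-(β : ℂ)) • H)).trace.re
  have hSρ : vonNeumannEntropy ρ ≤ β * (H * ρ).trace.re + c := by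
    have hklein := re_trace_mul_cfc_log_add_vonNeumannEntropy_le hρ (hH.posDef_thermalState β)
    rw [hH.trace_thermalState, htr, hH.re_trace_mul_cfc_log_thermalState β htr] at hklein
    linarith
  have hSρβ : vonNeumannEntropy (thermalState β H) = β * (H * thermalState β H).trace.re + c := by
    rw [vonNeumannEntropy_eq_neg_re_trace_mul_cfc_log (hH.posDef_thermalState β).1,
      hH.re_trace_mul_cfc_log_thermalState β (hH.trace_thermalState β)]
    ring
  calc (H * thermalState β H).trace.re - 1 / β * vonNeumannEntropy (thermalState β H)
      = (H * ρ).trace.re - 1 / β * (β * (H * ρ).trace.re + c) := by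
        rw [hSρβ]
        field_simp
        ring
    _ ≤ (H * ρ).trace.re - 1 / β * vonNeumannEntropy ρ := by gcongr
end

section
/- Rényi-entropy bound on truncation error: Let λ : ℕ → ℝ be a nonincreasing sequence of nonnegative reals with ∑_{i=0}^∞ λ_i = 1 (summable), and let 0 < α < 1 be such that the sequence (λ_i^α) is summable. Define the truncation error ε(D) = ∑_{i=D}^∞ λ_i (the tail after removing the D largest values) and the Rényi entropy S_α = (1/(1−α))·log(∑_{i=0}^∞ λ_i^α). Then for every D ≥ 1, ε(D) ≤ exp( ((1−α)/α) · ( S_α − log(D/(1−α)) ) ). -/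
/-!
Split `S = ∑ λᵢ^α` into the head `A = ∑_{i<D} λᵢ^α` and the tail `S - A`. Since `λ` is
nonincreasing, every tail term satisfies `λᵢ ≤ λ_D^(1-α) λᵢ^α` and `D λ_D^α ≤ A`, so
`ε(D) ≤ (A/D)^((1-α)/α) · (S - A)`. Weighted AM-GM bounds `A^((1-α)/α) (S - A)` by
`α (1-α)^((1-α)/α) S^(1/α)`, which is the claimed bound up to the factor `α < 1`.
-/

open Real

lemma rpow_mul_sub_le {α A S : ℝ} (hα0 : 0 < α) (hα1 : α < 1) (hA : 0 ≤ A)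
    (hAS : A ≤ S) :
    A ^ ((1 - α) / α) * (S - A) ≤ α * (1 - α) ^ ((1 - α) / α) * S ^ (1 / α) := by
  have h1α : 0 < 1 - α := by linarith
  have hamgm : (A / (1 - α)) ^ (1 - α) * ((S - A) / α) ^ α ≤ S := by
    have := geom_mean_le_arith_mean2_weighted h1α.le hα0.le (div_nonneg hA h1α.le)
      (div_nonneg (sub_nonneg.2 hAS) hα0.le) (by ring)
    rwa [mul_div_cancel₀ _ h1α.ne', mul_div_cancel₀ _ hα0.ne', add_sub_cancel] at this
  have hpow := rpow_le_rpow (by positivity) hamgm (one_div_nonneg.2 hα0.le)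
  rw [mul_rpow (by positivity) (by positivity), ← rpow_mul (by positivity),
    ← rpow_mul (by positivity), mul_one_div, mul_one_div_cancel hα0.ne', rpow_one,
    div_rpow hA h1α.le, div_mul_div_comm, div_le_iff₀ (by positivity)] at hpow
  linarith

lemma le_rpow_one_sub_mul_rpow {x y α : ℝ} (hx : 0 ≤ x) (hxy : x ≤ y) (hα : α ≤ 1) :
    x ≤ y ^ (1 - α) * x ^ α := by
  have hα' : 0 ≤ 1 - α := by linarith
  calc x = x ^ (1 - α) * x ^ α := by
        rw [← rpow_add' hx (by rw [sub_add_cancel]; exact one_ne_zero), sub_add_cancel, rpow_one]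
    _ ≤ y ^ (1 - α) * x ^ α := by gcongr

lemma Antitone.nsmul_le_sum_range {M : Type*} [AddCommMonoid M] [PartialOrder M]
    [IsOrderedAddMonoid M] {f : ℕ → M} (hf : Antitone f) (n : ℕ) :
    n • f n ≤ ∑ i ∈ Finset.range n, f i := by
  simpa using Finset.card_nsmul_le_sum (Finset.range n) f (f n)
    fun i hi => hf (Finset.mem_range.1 hi).le

section AntitoneRpow

variable {f : ℕ → ℝ} {α : ℝ}

lemma Antitone.summable_of_summable_rpow (hf : Antitone f) (hf0 : ∀ i, 0 ≤ f i) (hα : α ≤ 1)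
    (h : Summable fun i => f i ^ α) : Summable f :=
  Summable.of_nonneg_of_le hf0
    (fun i => le_rpow_one_sub_mul_rpow (hf0 i) (hf (Nat.zero_le i)) hα) (h.mul_left _)

lemma Antitone.tsum_nat_add_le_rpow_mul (hf : Antitone f) (hf0 : ∀ i, 0 ≤ f i) (hα : α ≤ 1)
    (h : Summable fun i => f i ^ α) (D : ℕ) :
    ∑' i, f (i + D) ≤ f D ^ (1 - α) * ∑' i, f (i + D) ^ α := by
  rw [← tsum_mul_left]
  exact Summable.tsum_le_tsum
    (fun i => le_rpow_one_sub_mul_rpow (hf0 _) (hf (Nat.le_add_left D i)) hα)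
    ((summable_nat_add_iff D).2 (hf.summable_of_summable_rpow hf0 hα h))
    (((summable_nat_add_iff D).2 h).mul_left _)

lemma Antitone.tsum_nat_add_le_rpow (hf : Antitone f) (hf0 : ∀ i, 0 ≤ f i) (hα0 : 0 < α)
    (hα1 : α < 1) (h : Summable fun i => f i ^ α) {D : ℕ} (hD : 0 < D) :
    ∑' i, f (i + D) ≤
      ((1 - α) / D) ^ ((1 - α) / α) * (∑' i, f i ^ α) ^ (1 / α) := by
  set β := (1 - α) / α with hβ
  set S := ∑' i, f i ^ α
  set A := ∑ i ∈ Finset.range D, f i ^ α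
  have hD' : (0 : ℝ) < D := Nat.cast_pos.2 hD
  have h1α : 0 < 1 - α := by linarith
  have hA : 0 ≤ A := Finset.sum_nonneg fun i _ => rpow_nonneg (hf0 i) α
  have htail : ∑' i, f (i + D) ^ α = S - A := eq_sub_of_add_eq' (h.sum_add_tsum_nat_add D)
  have hAS : A ≤ S := by
    linarith [htail ▸ tsum_nonneg fun i => rpow_nonneg (hf0 (i + D)) α]
  have hS : 0 ≤ S := hA.trans hAS
  have hhead : f D ^ (1 - α) ≤ (A / D) ^ β := by
    have hfα : Antitone fun i => f i ^ α := fun i j hij => rpow_le_rpow (hf0 j) (hf hij) hα0.le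
    have hmean : f D ^ α ≤ A / D := by
      rw [le_div_iff₀ hD', mul_comm, ← nsmul_eq_mul]
      exact hfα.nsmul_le_sum_range D
    calc f D ^ (1 - α) = (f D ^ α) ^ β := by
          rw [← rpow_mul (hf0 D), hβ, mul_div_cancel₀ _ hα0.ne']
      _ ≤ (A / D) ^ β := by gcongr; exact rpow_nonneg (hf0 D) α
  calc ∑' i, f (i + D) ≤ f D ^ (1 - α) * (S - A) :=
        htail ▸ hf.tsum_nat_add_le_rpow_mul hf0 hα1.le h D
    _ ≤ (A / D) ^ β * (S - A) := by gcongr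
    _ = A ^ β * (S - A) / (D : ℝ) ^ β := by rw [div_rpow hA hD'.le]; ring
    _ ≤ α * (1 - α) ^ β * S ^ (1 / α) / (D : ℝ) ^ β := by
        gcongr ?_ / _; exact rpow_mul_sub_le hα0 hα1 hA hAS
    _ ≤ (1 - α) ^ β * S ^ (1 / α) / (D : ℝ) ^ β := by
        gcongr ?_ / _
        rw [mul_assoc]
        exact mul_le_of_le_one_left (mul_nonneg (rpow_nonneg h1α.le _) (rpow_nonneg hS _)) hα1.le
    _ = ((1 - α) / D) ^ β * S ^ (1 / α) := by rw [div_rpow h1α.le hD'.le]; ring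

end AntitoneRpow

theorem renyi_entropy_truncation_bound_general (lam : ℕ → ℝ)
    (hmono : Antitone lam) (hnonneg : ∀ i, 0 ≤ lam i)
    (α : ℝ) (hα0 : 0 < α) (hα1 : α < 1)
    (hsumα : Summable fun i => lam i ^ α) :
    ∀ D : ℕ, 1 ≤ D →
      (∑' i : ℕ, lam (i + D)) ≤
        Real.exp (((1 - α) / α) *
          ((1 / (1 - α)) * Real.log (∑' i : ℕ, lam i ^ α) -
            Real.log ((D : ℝ) / (1 - α)))) := by
  intro D hD
  set S := ∑' i, lam i ^ α
  have h1α : 0 < 1 - α := by linarith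
  have hD' : (0 : ℝ) < D := Nat.cast_pos.2 hD
  have hlog : log ((1 - α) / D) = -log (D / (1 - α)) := by rw [← log_inv, inv_div]
  have hexp : ((1 - α) / α) * ((1 / (1 - α)) * log S - log (D / (1 - α))) =
      log S * (1 / α) + log ((1 - α) / D) * ((1 - α) / α) := by
    rw [hlog]; field_simp; ring
  calc ∑' i, lam (i + D) ≤ ((1 - α) / D) ^ ((1 - α) / α) * S ^ (1 / α) :=
        hmono.tsum_nat_add_le_rpow hnonneg hα0 hα1 hsumα hD
    _ ≤ exp (log S * (1 / α)) * ((1 - α) / D) ^ ((1 - α) / α) := by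
        rw [mul_comm]
        gcongr
        -- `S ^ (1 / α)` and `exp (log S / α)` differ only at `S = 0`, where the former is `0`
        exact (le_abs_self _).trans (abs_rpow_le_exp_log_mul S _)
    _ = _ := by rw [hexp, exp_add, ← rpow_def_of_pos (div_pos h1α hD')]

/-- **Rényi-entropy bound on the truncation error.** Let `λ : ℕ → ℝ` be a nonincreasing
nonnegative summable sequence with total sum `1`, and let `0 < α < 1` be such that
`(λ_i^α)` is summable. Then the tail `ε(D) = ∑_{i ≥ D} λ_i` satisfies
`ε(D) ≤ exp( ((1−α)/α) · (S_α − log(D/(1−α))) )` for every `D ≥ 1`, where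
`S_α = (1/(1−α))·log(∑ λ_i^α)` is the Rényi entropy. -/
theorem renyi_entropy_truncation_bound (lam : ℕ → ℝ)
    (hmono : Antitone lam) (hnonneg : ∀ i, 0 ≤ lam i)
    (hsum : Summable lam) (htotal : ∑' i, lam i = 1)
    (α : ℝ) (hα0 : 0 < α) (hα1 : α < 1)
    (hsumα : Summable fun i => lam i ^ α) :
    ∀ D : ℕ, 1 ≤ D →
      (∑' i : ℕ, lam (i + D)) ≤
        Real.exp (((1 - α) / α) *
          ((1 / (1 - α)) * Real.log (∑' i : ℕ, lam i ^ α) -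
            Real.log ((D : ℝ) / (1 - α)))) :=
  renyi_entropy_truncation_bound_general lam hmono hnonneg α hα0 hα1 hsumα
end

section
/- Hermiticity, positivity and ground state of the kinetic-model Hamiltonian: Let S be a nonempty finite type, W : S → S → ℝ with W(σ,σ') ≥ 0 for all σ,σ', H : S → ℝ, and β ∈ ℝ, and assume detailed balance: W(σ,σ')·exp(−β·H(σ')) = W(σ',σ)·exp(−β·H(σ)) for all σ,σ'. Define the real matrix M indexed by S with entries M(σ,σ') = (if σ = σ' then ∑_{σ''} W(σ'',σ) else 0) − exp(β·H(σ)/2)·W(σ,σ')·exp(−β·H(σ')/2). Then: (i) M is symmetric; (ii) the vector v with v(σ) = exp(−β·H(σ)/2) satisfies M·v = 0; and (iii) M is positive semidefinite, i.e. ∑_{σ,σ'} x(σ)·M(σ,σ')·x(σ') ≥ 0 for every x : S → ℝ. -/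
open scoped BigOperators

/-- The Hamiltonian matrix of a classical kinetic model, obtained from the master equation
by the similarity transformation `ψ(σ) = exp(β·H(σ)/2)·P(σ)`:
`M(σ,σ') = (if σ = σ' then ∑_{σ''} W(σ'',σ) else 0) − e^{βH(σ)/2}·W(σ,σ')·e^{−βH(σ')/2}`. -/
noncomputable def kineticHamiltonian {S : Type*} [Fintype S] [DecidableEq S]
    (W : S → S → ℝ) (H : S → ℝ) (β : ℝ) : Matrix S S ℝ :=
  fun σ σ' => (if σ = σ' then ∑ σ'', W σ'' σ else 0)
    - Real.exp (β * H σ / 2) * W σ σ' * Real.exp (-(β * H σ' / 2))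

/-!
Writing `v(σ) = e^{−βH(σ)/2}`, the matrix is `M = −D⁻¹ G D` with `G` the generator of the master
equation and `D = diag v`, and detailed balance says that the flux `c(σ,σ') = W(σ,σ') v(σ')²` is
symmetric. This gives the symmetry of `M`, and `M v = −D⁻¹ G v²` vanishes because the Gibbs
weights `v²` are stationary. With `y = x / v` the quadratic form of `M` is the Dirichlet form
`½ ∑ c(σ,σ') (y(σ) − y(σ'))²`, which is nonnegative since `W ≥ 0`.
-/

theorem sum_sum_mul_sub_sq_eq_of_symm {ι : Type*} [Fintype ι] {c : ι → ι → ℝ} (hc : ∀ i j, c i j = c j i) (y : ι → ℝ) :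
    ∑ i, ∑ j, c i j * (y i - y j) ^ 2
      = 2 * (∑ i, ∑ j, c i j * y i ^ 2 - ∑ i, ∑ j, c i j * y i * y j) := by
  have hswap : ∑ i, ∑ j, c i j * y j ^ 2 = ∑ i, ∑ j, c i j * y i ^ 2 := by
    rw [Finset.sum_comm]
    simp only [hc]
  calc ∑ i, ∑ j, c i j * (y i - y j) ^ 2
      = ∑ i, ∑ j, (c i j * y i ^ 2 + c i j * y j ^ 2 - 2 * (c i j * y i * y j)) := by
        congr! 2; ring
    _ = 2 * (∑ i, ∑ j, c i j * y i ^ 2 - ∑ i, ∑ j, c i j * y i * y j) := by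
        simp only [Finset.sum_sub_distrib, Finset.sum_add_distrib, ← Finset.mul_sum, hswap]
        ring

section SymmetrizedGenerator

open Matrix

variable {ι : Type*} [Fintype ι] [DecidableEq ι]

noncomputable def symmetrizedGenerator (W : ι → ι → ℝ) (v : ι → ℝ) : Matrix ι ι ℝ :=
  diagonal (fun i => ∑ k, W k i) - of fun i j => (v i)⁻¹ * W i j * v j

variable {W : ι → ι → ℝ} {v : ι → ℝ}

theorem symmetrizedGenerator_apply (i j : ι) :
    symmetrizedGenerator W v i j = (if i = j then ∑ k, W k i else 0) - (v i)⁻¹ * W i j * v j :=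
  rfl

variable (hdb : ∀ i j, W i j * v j ^ 2 = W j i * v i ^ 2) (hv : ∀ i, v i ≠ 0)
include hdb hv

theorem symmetrizedGenerator_isSymm : (symmetrizedGenerator W v).IsSymm := by
  ext i j
  rw [transpose_apply, symmetrizedGenerator_apply, symmetrizedGenerator_apply]
  by_cases hij : i = j
  · subst hij; rfl
  · rw [if_neg hij, if_neg (Ne.symm hij)]
    field_simp [hv i, hv j]
    linear_combination hdb i j

theorem symmetrizedGenerator_mulVec_self : symmetrizedGenerator W v *ᵥ v = 0 := by
  have hflux : ∀ i j, (v i)⁻¹ * W i j * v j * v j = W j i * v i := fun i j => by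
    field_simp [hv i]
    linear_combination hdb i j
  ext i
  simp only [mulVec, dotProduct, symmetrizedGenerator_apply, sub_mul, Finset.sum_sub_distrib,
    ite_mul, zero_mul, Finset.sum_ite_eq, Finset.mem_univ, if_true, hflux, ← Finset.sum_mul,
    sub_self, Pi.zero_apply]

theorem symmetrizedGenerator_quadForm_eq (x : ι → ℝ) :
    ∑ i, ∑ j, x i * symmetrizedGenerator W v i j * x j
      = (∑ i, ∑ j, W i j * v j ^ 2 * (x i / v i - x j / v j) ^ 2) / 2 := by
  have hdiag : ∀ i, x i * (∑ k, W k i) * x i = ∑ j, W i j * v j ^ 2 * (x i / v i) ^ 2 := fun i => by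
    rw [Finset.mul_sum, Finset.sum_mul]
    refine Finset.sum_congr rfl fun j _ => ?_
    field_simp [hv i]
    linear_combination x i ^ 2 * hdb j i
  have hoff : ∀ i j, x i * ((v i)⁻¹ * W i j * v j) * x j
      = W i j * v j ^ 2 * (x i / v i) * (x j / v j) := fun i j => by
    field_simp [hv i, hv j]
  simp only [symmetrizedGenerator_apply, mul_sub, sub_mul, Finset.sum_sub_distrib, mul_ite,
    ite_mul, mul_zero, zero_mul, Finset.sum_ite_eq, Finset.mem_univ, if_true, hdiag, hoff]
  rw [sum_sum_mul_sub_sq_eq_of_symm hdb, mul_div_cancel_left₀ _ two_ne_zero]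

theorem symmetrizedGenerator_quadForm_nonneg (hW : ∀ i j, 0 ≤ W i j) (x : ι → ℝ) :
    0 ≤ ∑ i, ∑ j, x i * symmetrizedGenerator W v i j * x j := by
  rw [symmetrizedGenerator_quadForm_eq hdb hv]
  refine div_nonneg (Finset.sum_nonneg fun i _ => Finset.sum_nonneg fun j _ => ?_) zero_le_two
  have := hW i j
  positivity

end SymmetrizedGenerator

theorem kineticHamiltonian_eq_symmetrizedGenerator {S : Type*} [Fintype S] [DecidableEq S]
    (W : S → S → ℝ) (H : S → ℝ) (β : ℝ) :
    kineticHamiltonian W H β = symmetrizedGenerator W fun σ => Real.exp (-(β * H σ / 2)) := by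
  ext σ σ'
  rw [symmetrizedGenerator_apply, ← Real.exp_neg, neg_neg]
  rfl

theorem kineticHamiltonian_symm_groundState_posSemidef_general
    (S : Type*) [Fintype S] [DecidableEq S]
    (W : S → S → ℝ) (hW : ∀ σ σ', 0 ≤ W σ σ') (H : S → ℝ) (β : ℝ)
    (hdb : ∀ σ σ', W σ σ' * Real.exp (-(β * H σ')) = W σ' σ * Real.exp (-(β * H σ))) :
    (kineticHamiltonian W H β).IsSymm ∧
    (kineticHamiltonian W H β).mulVec (fun σ => Real.exp (-(β * H σ / 2))) = 0 ∧
    ∀ x : S → ℝ, 0 ≤ ∑ σ, ∑ σ', x σ * kineticHamiltonian W H β σ σ' * x σ' := by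
  set v : S → ℝ := fun σ => Real.exp (-(β * H σ / 2))
  have hv : ∀ σ, v σ ≠ 0 := fun σ => (Real.exp_pos _).ne'
  have hv_sq : ∀ σ, v σ ^ 2 = Real.exp (-(β * H σ)) := fun σ => by
    rw [sq, ← Real.exp_add]
    ring_nf
  have hdb_v : ∀ σ σ', W σ σ' * v σ' ^ 2 = W σ' σ * v σ ^ 2 := by
    simpa only [hv_sq] using hdb
  rw [kineticHamiltonian_eq_symmetrizedGenerator]
  exact ⟨symmetrizedGenerator_isSymm hdb_v hv, symmetrizedGenerator_mulVec_self hdb_v hv,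
    symmetrizedGenerator_quadForm_nonneg hdb_v hv hW⟩

/-- **Hermiticity, positivity and ground state of the kinetic-model Hamiltonian.** Under
detailed balance, the matrix `M` of the transformed master equation is (i) symmetric,
(ii) annihilates the vector `v(σ) = e^{−βH(σ)/2}` (the Gibbs ground state), and (iii) is
positive semidefinite. -/
theorem kineticHamiltonian_symm_groundState_posSemidef
    (S : Type*) [Fintype S] [DecidableEq S] [Nonempty S]
    (W : S → S → ℝ) (hW : ∀ σ σ', 0 ≤ W σ σ') (H : S → ℝ) (β : ℝ)
    (hdb : ∀ σ σ', W σ σ' * Real.exp (-(β * H σ')) = W σ' σ * Real.exp (-(β * H σ))) :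
    (kineticHamiltonian W H β).IsSymm ∧
    (kineticHamiltonian W H β).mulVec (fun σ => Real.exp (-(β * H σ / 2))) = 0 ∧
    ∀ x : S → ℝ, 0 ≤ ∑ σ, ∑ σ', x σ * kineticHamiltonian W H β σ σ' * x σ' :=
  kineticHamiltonian_symm_groundState_posSemidef_general S W hW H β hdb
end

section
/- Positivity of the local term of the two-spin-flip quantum kinetic Hamiltonian (boundary-mismatch case): For every φ ∈ [0, π/4], the 8 × 8 real matrix M = I₈ − (sin(2φ)/2)·(I₂ ⊗ σ_z ⊗ σ_z) − √(cos(2φ))·(σ_x ⊗ σ_x ⊗ I₂) is positive semidefinite, where ⊗ denotes the Kronecker product. (Its minimal eigenvalue is 1 − (1/2)·√(4·cos(2φ) + sin²(2φ)) ≥ 0, vanishing only at φ = 0.) -/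
open scoped BigOperators Kronecker
open Real

/-- The Pauli matrix `σ_x`. -/
def pauliX : Matrix (Fin 2) (Fin 2) ℝ := !![0, 1; 1, 0]

/-- The Pauli matrix `σ_z`. -/
def pauliZ : Matrix (Fin 2) (Fin 2) ℝ := !![1, 0; 0, -1]

/-!
Flipping the first two spins pairs the eight basis states `(s₁, s₂, s₃)` into four orbits, and
on each orbit `σ_z ⊗ σ_z` acting on the last two spins takes the values `+1` and `-1`. Hence
`1 - a (I ⊗ σ_z ⊗ σ_z) - b (σ_x ⊗ σ_x ⊗ I)` is a direct sum of four copies of the `2 × 2` matrix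
`!![1 - a, -b; -b, 1 + a]`, whose eigenvalues are `1 ± √(a² + b²)`. With `a = sin(2φ)/2` and
`b = √(cos(2φ))` one has `4(a² + b²) = 4 cos(2φ) + sin²(2φ) = 4 - (1 - cos(2φ))(3 - cos(2φ))`.
-/

open Matrix

lemma pauliX_isHermitian : pauliX.IsHermitian := by
  ext i j; fin_cases i <;> fin_cases j <;> rfl

lemma pauliZ_isHermitian : pauliZ.IsHermitian := by
  ext i j; fin_cases i <;> fin_cases j <;> rfl

lemma Matrix.IsHermitian.kronecker {m n R : Type*} [CommSemiring R] [StarRing R]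
    {A : Matrix m m R} {B : Matrix n n R}
    (hA : A.IsHermitian) (hB : B.IsHermitian) : (A ⊗ₖ B).IsHermitian := by
  rw [IsHermitian, conjTranspose_kronecker, hA, hB]

/-- The quadratic form of `!![1 - a, -b; -b, 1 + a]`. -/
def pairForm (a b x y : ℝ) : ℝ := (1 - a) * x ^ 2 + (1 + a) * y ^ 2 - 2 * b * x * y

lemma pairForm_nonneg {a b : ℝ} (h : a ^ 2 + b ^ 2 ≤ 1) (x y : ℝ) : 0 ≤ pairForm a b x y := by
  unfold pairForm
  nlinarith [sq_nonneg ((1 - a) * x - b * y), sq_nonneg ((1 + a) * y - b * x),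
    mul_le_mul_of_nonneg_right h (sq_nonneg x), mul_le_mul_of_nonneg_right h (sq_nonneg y),
    sq_nonneg b]

lemma dotProduct_twoFlip_mulVec (a b : ℝ) (x : Fin 2 × Fin 2 × Fin 2 → ℝ) :
    x ⬝ᵥ ((1 : Matrix (Fin 2 × Fin 2 × Fin 2) (Fin 2 × Fin 2 × Fin 2) ℝ) -
        a • ((1 : Matrix (Fin 2) (Fin 2) ℝ) ⊗ₖ (pauliZ ⊗ₖ pauliZ)) -
        b • (pauliX ⊗ₖ (pauliX ⊗ₖ (1 : Matrix (Fin 2) (Fin 2) ℝ)))) *ᵥ x =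
      pairForm a b (x (0, 0, 0)) (x (1, 1, 0)) + pairForm a b (x (1, 0, 0)) (x (0, 1, 0)) +
      pairForm a b (x (1, 1, 1)) (x (0, 0, 1)) + pairForm a b (x (0, 1, 1)) (x (1, 0, 1)) := by
  simp only [dotProduct, mulVec, pauliZ, pauliX, Matrix.sub_apply, one_apply, Matrix.smul_apply,
    kroneckerMap_apply, of_apply, cons_val', cons_val_fin_one, ite_mul, one_mul, zero_mul,
    smul_eq_mul, mul_ite, mul_zero, mul_one, Fintype.sum_prod_type, Fin.sum_univ_two, Fin.isValue,
    cons_val_zero, cons_val_one, Prod.mk.injEq, and_true, ↓reduceIte, zero_ne_one, and_false,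
    ite_self, sub_self, add_zero, one_ne_zero, mul_neg, zero_add, sub_zero, zero_sub, neg_mul,
    neg_zero, neg_neg, sub_neg_eq_add, pairForm]
  ring

theorem posSemidef_twoFlip_of_sq_add_sq_le_one {a b : ℝ} (h : a ^ 2 + b ^ 2 ≤ 1) :
    ((1 : Matrix (Fin 2 × Fin 2 × Fin 2) (Fin 2 × Fin 2 × Fin 2) ℝ) -
        a • ((1 : Matrix (Fin 2) (Fin 2) ℝ) ⊗ₖ (pauliZ ⊗ₖ pauliZ)) -
        b • (pauliX ⊗ₖ (pauliX ⊗ₖ (1 : Matrix (Fin 2) (Fin 2) ℝ)))).PosSemidef := by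
  refine posSemidef_iff_dotProduct_mulVec.mpr ⟨?_, fun x => ?_⟩
  · exact (isHermitian_one.sub
      ((isHermitian_one.kronecker (pauliZ_isHermitian.kronecker pauliZ_isHermitian)).smul
        (IsSelfAdjoint.all a))).sub
      ((pauliX_isHermitian.kronecker (pauliX_isHermitian.kronecker isHermitian_one)).smul
        (IsSelfAdjoint.all b))
  · rw [star_trivial, dotProduct_twoFlip_mulVec]
    have hpair := pairForm_nonneg h
    linarith [hpair (x (0, 0, 0)) (x (1, 1, 0)), hpair (x (1, 0, 0)) (x (0, 1, 0)),
      hpair (x (1, 1, 1)) (x (0, 0, 1)), hpair (x (0, 1, 1)) (x (1, 0, 1))]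

lemma four_mul_cos_add_sin_sq (θ : ℝ) :
    4 * cos θ + sin θ ^ 2 = 4 - (1 - cos θ) * (3 - cos θ) := by
  linear_combination sin_sq_add_cos_sq θ

lemma sqrt_four_mul_cos_add_sin_sq_le_two (θ : ℝ) : √(4 * cos θ + sin θ ^ 2) ≤ 2 := by
  rw [sqrt_le_left zero_le_two, four_mul_cos_add_sin_sq]
  nlinarith [cos_le_one θ]

lemma sqrt_four_mul_cos_add_sin_sq_eq_two_iff (θ : ℝ) :
    √(4 * cos θ + sin θ ^ 2) = 2 ↔ cos θ = 1 := by
  have h3 : 3 - cos θ ≠ 0 := by linarith [cos_le_one θ]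
  rw [sqrt_eq_iff_mul_self_eq_of_pos two_pos, four_mul_cos_add_sin_sq]
  calc 2 * 2 = 4 - (1 - cos θ) * (3 - cos θ) ↔ (1 - cos θ) * (3 - cos θ) = 0 := by
        constructor <;> intro h <;> linarith
    _ ↔ cos θ = 1 := by rw [mul_eq_zero, or_iff_left h3, sub_eq_zero, eq_comm]

lemma cos_two_mul_eq_one_iff {φ : ℝ} (h₁ : -π < φ) (h₂ : φ < π) :
    cos (2 * φ) = 1 ↔ φ = 0 := by
  rw [cos_eq_one_iff_of_lt_of_lt (by linarith) (by linarith)]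
  constructor <;> intro h <;> linarith

/-- **Positivity of the local term of the two-spin-flip quantum kinetic Hamiltonian
(boundary-mismatch case).** For every `φ ∈ [0, π/4]`, the `8 × 8` matrix
`M = I₈ − (sin(2φ)/2)·(I₂ ⊗ σ_z ⊗ σ_z) − √(cos(2φ))·(σ_x ⊗ σ_x ⊗ I₂)` is positive
semidefinite; its minimal eigenvalue `1 − (1/2)·√(4·cos(2φ) + sin²(2φ))` is nonnegative
and vanishes only at `φ = 0`. -/
theorem two_flip_local_term_posSemidef (φ : ℝ) (hφ0 : 0 ≤ φ) (hφ1 : φ ≤ π / 4) :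
    ((1 : Matrix (Fin 2 × Fin 2 × Fin 2) (Fin 2 × Fin 2 × Fin 2) ℝ) -
        (Real.sin (2 * φ) / 2) • ((1 : Matrix (Fin 2) (Fin 2) ℝ) ⊗ₖ (pauliZ ⊗ₖ pauliZ)) -
        Real.sqrt (Real.cos (2 * φ)) • (pauliX ⊗ₖ (pauliX ⊗ₖ (1 : Matrix (Fin 2) (Fin 2) ℝ)))).PosSemidef ∧
    0 ≤ 1 - (1 / 2) * Real.sqrt (4 * Real.cos (2 * φ) + Real.sin (2 * φ) ^ 2) ∧
    (1 - (1 / 2) * Real.sqrt (4 * Real.cos (2 * φ) + Real.sin (2 * φ) ^ 2) = 0 ↔ φ = 0) := by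
  have hcos : 0 ≤ cos (2 * φ) := cos_nonneg_of_mem_Icc ⟨by linarith [pi_pos], by linarith⟩
  have hsqrt := sqrt_four_mul_cos_add_sin_sq_le_two (2 * φ)
  refine ⟨posSemidef_twoFlip_of_sq_add_sq_le_one ?_, by linarith, ?_⟩
  · rw [div_pow, sq_sqrt hcos]
    have hsum := (sqrt_le_left zero_le_two).mp hsqrt
    linarith
  · rw [← cos_two_mul_eq_one_iff (φ := φ) (by linarith [pi_pos]) (by linarith [pi_pos]),
      ← sqrt_four_mul_cos_add_sin_sq_eq_two_iff]
    constructor <;> intro h <;> linarith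
end
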